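/- The total number b_n of standard Young tableaux of size n whose shape is a hook with an additional box at position (2,2) equals (n-4)·2^{n-2} + 2 for all n ≥ 4. -/

import Mathlib

/-
A standard tableau of shape (a, 2, 1^b) is determined by the entry m of the box (2,2) and the
set C of entries of the first column below the corner: the first row then holds the remaining
entries in increasing order. The admissible pairs are exactly those with C ⊆ [2, n] \ {m} and
C ∩ [2, m) a nonempty proper subset of [2, m): nonempty because of the entry left of the box,
proper because of the entry above it. The entries of C above m are free, so
b_n = ∑_{m=2}^{n} (2^(m-2) - 2) 2^(n-m) = (n-4) 2^(n-2) + 2.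
-/

/-- A standard Young tableau on a given finite set of cells: the entries on the
cells are a bijection onto `{1, ..., #cells}`, rows and columns are strictly
increasing, and the function vanishes off the cells. Cells are `(row, column)`
pairs, `0`-indexed. -/
def IsSYTOn (cells : Finset (ℕ × ℕ)) (T : ℕ × ℕ → ℕ) : Prop :=
  Set.BijOn T ↑cells ↑(Finset.Icc 1 cells.card) ∧
  (∀ p ∈ cells, ∀ q ∈ cells, p.1 = q.1 → p.2 < q.2 → T p < T q) ∧
  (∀ p ∈ cells, ∀ q ∈ cells, p.2 = q.2 → p.1 < q.1 → T p < T q) ∧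
  (∀ p, p ∉ cells → T p = 0)

/-- The cells of a hook with an additional box at position (2,2) (1-indexed):
first row of length `a`, second row of length 2, and `b` further rows of
length 1. -/
def hookPlusCells (a b : ℕ) : Finset (ℕ × ℕ) :=
  ((Finset.range a).image fun j => (0, j)) ∪ {(1, 0), (1, 1)} ∪
    ((Finset.range b).image fun i => (i + 2, 0))

open Finset

namespace Finset

lemma bijOn_of_image_eq_of_card_eq {α β : Type*} [DecidableEq β] {f : α → β}
    {s : Finset α} {t : Finset β} (h : s.image f = t) (hcard : #t = #s) :
    Set.BijOn f s t := by
  have hinj : Set.InjOn f s := injOn_of_card_image_eq (h ▸ hcard)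
  simpa [← coe_image, h] using hinj.bijOn_image

lemma card_filter_powerset_union {α : Type*} [DecidableEq α] {A B : Finset α}
    (hAB : Disjoint A B) (P : Finset α → Prop) [DecidablePred P] :
    #{C ∈ (A ∪ B).powerset | P (C ∩ A)} = #{D ∈ A.powerset | P D} * 2 ^ #B := by
  rw [← card_powerset B, ← card_product]
  refine card_nbij' (fun C => (C ∩ A, C ∩ B)) (fun DE => DE.1 ∪ DE.2) ?_ ?_ ?_ ?_
  · intro C hC
    simp only [coe_filter, mem_powerset, Set.mem_ofPred_eq] at hC
    simp [hC.2, inter_subset_right]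
  · rintro ⟨D, E⟩ hDE
    simp only [coe_product, coe_filter, mem_powerset, Set.mem_prod, Set.mem_ofPred_eq,
      mem_coe] at hDE
    obtain ⟨⟨hDA, hPD⟩, hEB⟩ := hDE
    simp only [coe_filter, mem_powerset, Set.mem_ofPred_eq]
    refine ⟨union_subset_union hDA hEB, ?_⟩
    rwa [union_inter_distrib_right, inter_eq_left.2 hDA,
      disjoint_iff_inter_eq_empty.1 (hAB.symm.mono_left hEB), union_empty]
  · intro C hC
    simp only [coe_filter, mem_powerset, Set.mem_ofPred_eq] at hC
    change C ∩ A ∪ C ∩ B = C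
    rw [← inter_union_distrib_left, inter_eq_left.2 hC.1]
  · rintro ⟨D, E⟩ hDE
    simp only [coe_product, coe_filter, mem_powerset, Set.mem_prod, Set.mem_ofPred_eq,
      mem_coe] at hDE
    obtain ⟨⟨hDA, -⟩, hEB⟩ := hDE
    simp only [union_inter_distrib_right, inter_eq_left.2 hDA, inter_eq_left.2 hEB,
      disjoint_iff_inter_eq_empty.1 (hAB.mono_left hDA),
      disjoint_iff_inter_eq_empty.1 (hAB.symm.mono_left hEB), union_empty, empty_union]

-- For `A = ∅` both sides vanish, the right one by truncated subtraction.
lemma card_filter_powerset_nonempty_ne {α : Type*} [DecidableEq α] (A : Finset α) :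
    #{D ∈ A.powerset | D.Nonempty ∧ D ≠ A} = 2 ^ #A - 2 := by
  rcases A.eq_empty_or_nonempty with rfl | hA
  · simp
  have : A.powerset.filter (fun D => D.Nonempty ∧ D ≠ A) = A.powerset \ {∅, A} := by
    ext D
    simp [nonempty_iff_ne_empty]
  rw [this, card_sdiff_of_subset (by simp [insert_subset_iff]), card_powerset,
    card_pair hA.ne_empty.symm]

section nth

variable (s : Finset ℕ)

lemma finite_ofPred_mem : (Set.ofPred (· ∈ s)).Finite := s.finite_toSet

@[simp] lemma finite_ofPred_mem_toFinset : (finite_ofPred_mem s).toFinset = s := by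
  ext; simp

lemma nth_mem_of_lt_card {i : ℕ} (hi : i < #s) : Nat.nth (· ∈ s) i ∈ s :=
  Nat.nth_mem_of_lt_card (finite_ofPred_mem s) (by simpa using hi)

lemma nth_of_card_le {i : ℕ} (hi : #s ≤ i) : Nat.nth (· ∈ s) i = 0 :=
  Nat.nth_of_card_le (finite_ofPred_mem s) (by simpa using hi)

lemma nth_strictMonoOn : StrictMonoOn (Nat.nth (· ∈ s)) (Set.Iio #s) := by
  simpa using Nat.nth_strictMonoOn (finite_ofPred_mem s)

lemma image_nth_range_card : (range #s).image (Nat.nth (· ∈ s)) = s := by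
  have := Nat.image_nth_Iio_card (finite_ofPred_mem s)
  rw [finite_ofPred_mem_toFinset] at this
  rw [← coe_inj, coe_image, coe_range, this]
  rfl

lemma nth_lt_of_lt_card_filter_lt {i y : ℕ} (h : i < #{x ∈ s | x < y}) :
    Nat.nth (· ∈ s) i < y := by
  apply Nat.nth_lt_of_lt_count
  rw [Nat.count_eq_card_filter_range]
  convert h using 2
  ext; simp [and_comm]

lemma eqOn_nth_of_strictMonoOn {f : ℕ → ℕ} {k : ℕ} (hf : StrictMonoOn f (Set.Iio k))
    (himage : (range k).image f = s) : Set.EqOn f (Nat.nth (· ∈ s)) (Set.Iio k) := by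
  obtain rfl : #s = k := by
    rw [← himage, card_image_of_injOn (by simpa using hf.injOn), card_range]
  have hdom : {i | ∀ _ : (Set.ofPred (· ∈ s)).Finite, i < #(finite_ofPred_mem s).toFinset} =
      Set.Iio #s := by
    ext; simp
  refine hdom ▸ Nat.eq_nth_of_strictMonoOn_of_mapsTo_of_surjOn f ?_ ?_ (hdom ▸ hf)
  · intro x hx
    rw [hdom, ← coe_range, ← coe_image, himage]
    exact hx
  · intro i hi
    rw [hdom] at hi
    change f i ∈ s
    rw [← himage]
    exact mem_image_of_mem f (by simpa using hi)

end nth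

end Finset

def hookPlusLegs (n m : ℕ) : Finset (Finset ℕ) :=
  ((Icc 2 n).erase m).powerset.filter fun C => (C ∩ Ico 2 m).Nonempty ∧ C ∩ Ico 2 m ≠ Ico 2 m

def hookPlusData (n : ℕ) : Finset (Σ _ : ℕ, Finset ℕ) :=
  (Icc 2 n).sigma (hookPlusLegs n)

lemma mem_hookPlusLegs {n m : ℕ} {C : Finset ℕ} :
    C ∈ hookPlusLegs n m ↔
      C ⊆ (Icc 2 n).erase m ∧ (C ∩ Ico 2 m).Nonempty ∧ C ∩ Ico 2 m ≠ Ico 2 m := by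
  simp [hookPlusLegs]

lemma card_hookPlusLegs {n m : ℕ} (hm : m ∈ Icc 2 n) :
    #(hookPlusLegs n m) = (2 ^ (m - 2) - 2) * 2 ^ (n - m) := by
  have hsplit : (Icc 2 n).erase m = Ico 2 m ∪ Ioc m n := by
    ext x; simp only [mem_erase, mem_Icc, mem_union, mem_Ico, mem_Ioc] at hm ⊢; omega
  have hdisj : Disjoint (Ico 2 m) (Ioc m n) := by
    rw [disjoint_left]; intro x; simp only [mem_Ico, mem_Ioc]; omega
  rw [hookPlusLegs, hsplit, card_filter_powerset_union hdisj (fun D => D.Nonempty ∧ D ≠ Ico 2 m),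
    card_filter_powerset_nonempty_ne, Nat.card_Ico, Nat.card_Ioc]

lemma sum_Icc_two_pow_sub_two_mul {n : ℕ} (hn : 4 ≤ n) :
    ∑ m ∈ Icc 2 n, (2 ^ (m - 2) - 2) * 2 ^ (n - m) = (n - 4) * 2 ^ (n - 2) + 2 := by
  induction n, hn using Nat.le_induction with
  | base => decide
  | succ n hn ih =>
    have hdouble : ∑ m ∈ Icc 2 n, (2 ^ (m - 2) - 2) * 2 ^ (n + 1 - m) =
        2 * ∑ m ∈ Icc 2 n, (2 ^ (m - 2) - 2) * 2 ^ (n - m) := by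
      rw [mul_sum]
      refine sum_congr rfl fun m hm => ?_
      rw [Nat.sub_add_comm (mem_Icc.1 hm).2, pow_succ]
      ring
    rw [sum_Icc_succ_top (by omega), hdouble, ih, Nat.sub_self, pow_zero, mul_one]
    obtain ⟨k, rfl⟩ : ∃ k, n = k + 4 := ⟨n - 4, by omega⟩
    simp only [show k + 4 + 1 - 2 = k + 3 by omega, show k + 4 - 2 = k + 2 by omega,
      show k + 4 + 1 - 4 = k + 1 by omega, Nat.add_sub_cancel]
    have : 2 ≤ 2 ^ (k + 3) := Nat.le_self_pow (by omega) 2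
    zify [this]
    ring

lemma card_hookPlusData {n : ℕ} (hn : 4 ≤ n) :
    #(hookPlusData n) = (n - 4) * 2 ^ (n - 2) + 2 := by
  rw [hookPlusData, card_sigma, sum_congr rfl fun m hm => card_hookPlusLegs hm,
    sum_Icc_two_pow_sub_two_mul hn]

def firstRowCells (a : ℕ) : Finset (ℕ × ℕ) := (range a).image fun j => (0, j)

def legCells (k : ℕ) : Finset (ℕ × ℕ) := (range k).image fun i => (i + 1, 0)

lemma card_firstRowCells (a : ℕ) : #(firstRowCells a) = a := by
  rw [firstRowCells, card_image_of_injective _ (fun _ _ h => (Prod.mk.inj h).2), card_range]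

lemma card_legCells (k : ℕ) : #(legCells k) = k := by
  rw [legCells, card_image_of_injective _ (fun _ _ h => by simpa using h), card_range]

lemma hookPlusCells_eq (a b : ℕ) :
    hookPlusCells a b = firstRowCells a ∪ insert (1, 1) (legCells (b + 1)) := by
  ext ⟨i, j⟩
  simp only [hookPlusCells, firstRowCells, legCells, mem_union, mem_insert, mem_singleton,
    mem_image, mem_range, Prod.mk.injEq]
  constructor
  · rintro ((⟨j', hj', rfl, rfl⟩ | ⟨rfl, rfl⟩ | ⟨rfl, rfl⟩) | ⟨i', hi', rfl, rfl⟩)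
    exacts [.inl ⟨j', hj', rfl, rfl⟩, .inr (.inr ⟨0, by omega, rfl, rfl⟩),
      .inr (.inl ⟨rfl, rfl⟩), .inr (.inr ⟨i' + 1, by omega, rfl, rfl⟩)]
  · rintro (⟨j', hj', rfl, rfl⟩ | ⟨rfl, rfl⟩ | ⟨_ | i', hi', rfl, rfl⟩)
    exacts [.inl (.inl ⟨j', hj', rfl, rfl⟩), .inl (.inr (.inr ⟨rfl, rfl⟩)),
      .inl (.inr (.inl ⟨rfl, rfl⟩)), .inr ⟨i', by omega, rfl, rfl⟩]

lemma mem_hookPlusCells {a b : ℕ} {p : ℕ × ℕ} :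
    p ∈ hookPlusCells a b ↔
      (∃ j < a, (0, j) = p) ∨ p = (1, 1) ∨ ∃ i < b + 1, (i + 1, 0) = p := by
  simp only [hookPlusCells_eq, firstRowCells, legCells, mem_union, mem_insert, mem_image,
    mem_range]

lemma disjoint_firstRowCells_insert_legCells (a k : ℕ) :
    Disjoint (firstRowCells a) (insert (1, 1) (legCells k)) := by
  simp [firstRowCells, legCells, disjoint_left]

lemma card_hookPlusCells (a b : ℕ) : #(hookPlusCells a b) = a + b + 2 := by
  rw [hookPlusCells_eq, card_union_of_disjoint (disjoint_firstRowCells_insert_legCells _ _),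
    card_insert_of_notMem (by simp [legCells]), card_firstRowCells, card_legCells]
  ring

lemma isSYTOn_hookPlusCells_iff {a b : ℕ} (ha : 2 ≤ a) {T : ℕ × ℕ → ℕ} :
    IsSYTOn (hookPlusCells a b) T ↔
      Set.BijOn T (hookPlusCells a b) (Icc 1 (a + b + 2)) ∧
      StrictMonoOn (fun j => T (0, j)) (Set.Iio a) ∧
      StrictMonoOn (fun i => T (i + 1, 0)) (Set.Iio (b + 1)) ∧
      T (0, 0) < T (1, 0) ∧ T (1, 0) < T (1, 1) ∧ T (0, 1) < T (1, 1) ∧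
      ∀ p ∉ hookPlusCells a b, T p = 0 := by
  have row {j} (hj : j < a) : (0, j) ∈ hookPlusCells a b :=
    mem_hookPlusCells.2 (.inl ⟨j, hj, rfl⟩)
  have leg {i} (hi : i < b + 1) : (i + 1, 0) ∈ hookPlusCells a b :=
    mem_hookPlusCells.2 (.inr (.inr ⟨i, hi, rfl⟩))
  have box : (1, 1) ∈ hookPlusCells a b := mem_hookPlusCells.2 (.inr (.inl rfl))
  rw [IsSYTOn, card_hookPlusCells]
  constructor
  · rintro ⟨hbij, hrow, hcol, hzero⟩
    refine ⟨hbij, fun j hj j' hj' h => hrow _ (row hj) _ (row hj') rfl h,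
      fun i hi i' hi' h => hcol _ (leg hi) _ (leg hi') rfl (by simpa using h),
      hcol _ (row (by omega)) _ (leg (by omega)) rfl (by simp),
      hrow _ (leg (by omega)) _ box rfl (by simp),
      hcol _ (row (by omega)) _ box rfl (by simp), hzero⟩
  · rintro ⟨hbij, hrow, hleg, h00, h10, h01, hzero⟩
    refine ⟨hbij, ?_, ?_, hzero⟩
    · intro p hp q hq hpq hlt
      rw [mem_hookPlusCells] at hp hq
      rcases hp with ⟨j, hj, rfl⟩ | rfl | ⟨i, hi, rfl⟩ <;>
        rcases hq with ⟨j', hj', rfl⟩ | rfl | ⟨i', hi', rfl⟩ <;>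
        simp only at hpq hlt <;> try omega
      · exact hrow hj hj' hlt
      · obtain rfl : i = 0 := by omega
        exact h10
    · intro p hp q hq hpq hlt
      rw [mem_hookPlusCells] at hp hq
      rcases hp with ⟨j, hj, rfl⟩ | rfl | ⟨i, hi, rfl⟩ <;>
        rcases hq with ⟨j', hj', rfl⟩ | rfl | ⟨i', hi', rfl⟩ <;>
        simp only at hpq hlt <;> try omega
      · subst hpq
        exact h01
      · subst hpq
        exact h00.trans_le (hleg.monotoneOn (by simp) hi' (Nat.zero_le i'))
      · exact hleg hi hi' (by omega)

def firstRowEntries (n m : ℕ) (C : Finset ℕ) : Finset ℕ := Icc 1 n \ insert m C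

noncomputable def hookPlusTableau (n m : ℕ) (C : Finset ℕ) : ℕ × ℕ → ℕ
  | (0, j) => Nat.nth (· ∈ firstRowEntries n m C) j
  | (1, 1) => m
  | (i + 1, 0) => Nat.nth (· ∈ C) i
  | _ => 0

section hookPlusTableau

variable {n m : ℕ} {C : Finset ℕ}

@[simp] lemma hookPlusTableau_zero (j : ℕ) :
    hookPlusTableau n m C (0, j) = Nat.nth (· ∈ firstRowEntries n m C) j := rfl

@[simp] lemma hookPlusTableau_one_one : hookPlusTableau n m C (1, 1) = m := rfl

@[simp] lemma hookPlusTableau_succ_zero (i : ℕ) :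
    hookPlusTableau n m C (i + 1, 0) = Nat.nth (· ∈ C) i := by
  cases i <;> rfl

lemma hookPlusTableau_eq_zero {a b : ℕ} (ha : #(firstRowEntries n m C) = a) (hb : #C = b + 1)
    {p : ℕ × ℕ} (hp : p ∉ hookPlusCells a b) : hookPlusTableau n m C p = 0 := by
  rw [mem_hookPlusCells] at hp
  push Not at hp
  obtain ⟨hrow, hbox, hleg⟩ := hp
  match p with
  | (0, j) => exact nth_of_card_le _ (ha ▸ not_lt.1 fun hj => hrow j hj rfl)
  | (1, 1) => exact absurd rfl hbox
  | (i + 1, 0) =>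
    rw [hookPlusTableau_succ_zero]
    exact nth_of_card_le _ (hb ▸ not_lt.1 fun hi => hleg i hi rfl)
  | (1, j + 2) => rfl
  | (i + 2, j + 1) => rfl

lemma mem_iff_exists_hookPlusTableau_eq (h0 : 0 ∉ C) {x : ℕ} :
    x ∈ C ↔ x ≠ 0 ∧ ∃ i, hookPlusTableau n m C (i + 1, 0) = x := by
  simp only [hookPlusTableau_succ_zero]
  constructor
  · intro hx
    obtain ⟨i, -, rfl⟩ := mem_image.1 ((image_nth_range_card C).symm ▸ hx)
    exact ⟨fun h => h0 (h ▸ hx), i, rfl⟩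
  · rintro ⟨hx, i, rfl⟩
    exact nth_mem_of_lt_card C (not_le.1 fun hi => hx (nth_of_card_le C hi))

lemma mem_firstRowEntries {x : ℕ} :
    x ∈ firstRowEntries n m C ↔ x ∈ Icc 1 n ∧ x ≠ m ∧ x ∉ C := by
  simp [firstRowEntries]

lemma insert_subset_Icc_one (hm : m ∈ Icc 2 n) (hC : C ∈ hookPlusLegs n m) :
    insert m C ⊆ Icc 1 n := by
  have hm' := mem_Icc.1 hm
  refine insert_subset (mem_Icc.2 ⟨by omega, hm'.2⟩) fun y hy => ?_
  have hy' := mem_Icc.1 (mem_of_mem_erase ((mem_hookPlusLegs.1 hC).1 hy))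
  exact mem_Icc.2 ⟨by omega, hy'.2⟩

lemma card_firstRowEntries_add (hm : m ∈ Icc 2 n) (hC : C ∈ hookPlusLegs n m) :
    #(firstRowEntries n m C) + 2 + (#C - 1) = n := by
  obtain ⟨hCsub, ⟨x, hx⟩, -⟩ := mem_hookPlusLegs.1 hC
  have hmC : m ∉ C := fun h => by simpa using hCsub h
  have hsub := insert_subset_Icc_one hm hC
  have hCpos : 0 < #C := card_pos.2 ⟨x, (mem_inter.1 hx).1⟩
  rw [firstRowEntries, card_sdiff_of_subset hsub, card_insert_of_notMem hmC, Nat.card_Icc]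
  have := card_le_card hsub
  rw [card_insert_of_notMem hmC, Nat.card_Icc] at this
  omega

lemma two_le_card_filter_firstRowEntries_lt (hm : m ∈ Icc 2 n) (hC : C ∈ hookPlusLegs n m) :
    2 ≤ #{x ∈ firstRowEntries n m C | x < m} := by
  obtain ⟨hCsub, -, hproper⟩ := mem_hookPlusLegs.1 hC
  obtain ⟨y, hy, hyC⟩ : ∃ y ∈ Ico 2 m, y ∉ C := by
    by_contra! h
    exact hproper (inter_eq_right.2 h)
  have h1C : 1 ∉ C := fun h => by simpa using hCsub h
  simp only [mem_Icc, mem_Ico] at hm hy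
  have hsub : {1, y} ⊆ {x ∈ firstRowEntries n m C | x < m} := by
    simp only [insert_subset_iff, singleton_subset_iff, mem_filter, mem_firstRowEntries,
      mem_Icc, h1C, hyC, not_false_eq_true, and_true]
    omega
  simpa [card_pair (show 1 ≠ y by omega)] using card_le_card hsub

lemma two_le_card_firstRowEntries (hm : m ∈ Icc 2 n) (hC : C ∈ hookPlusLegs n m) :
    2 ≤ #(firstRowEntries n m C) :=
  (two_le_card_filter_firstRowEntries_lt hm hC).trans (card_filter_le _ _)

lemma isSYTOn_hookPlusTableau (hm : m ∈ Icc 2 n) (hC : C ∈ hookPlusLegs n m) :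
    IsSYTOn (hookPlusCells #(firstRowEntries n m C) (#C - 1)) (hookPlusTableau n m C) := by
  rw [isSYTOn_hookPlusCells_iff (two_le_card_firstRowEntries hm hC)]
  have hRlt := two_le_card_filter_firstRowEntries_lt hm hC
  have hn := card_firstRowEntries_add hm hC
  set R := firstRowEntries n m C
  obtain ⟨hCsub, ⟨x, hx⟩, -⟩ := mem_hookPlusLegs.1 hC
  have hCge {z} (hz : z ∈ C) : 2 ≤ z := (mem_Icc.1 (mem_of_mem_erase (hCsub hz))).1
  have hCpos : 0 < #{z ∈ C | z < m} := card_pos.2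
    ⟨x, mem_filter.2 ⟨(mem_inter.1 hx).1, (mem_Ico.1 (mem_inter.1 hx).2).2⟩⟩
  have hm' := mem_Icc.1 hm
  have h1R : 1 ∈ R :=
    mem_firstRowEntries.2 ⟨mem_Icc.2 ⟨le_rfl, by omega⟩, by omega, fun h => by simpa using hCge h⟩
  have hRpos : 0 < #{z ∈ R | z < 2} := card_pos.2 ⟨1, mem_filter.2 ⟨h1R, by omega⟩⟩
  have hCcard : #C - 1 + 1 = #C := Nat.sub_add_cancel (card_pos.2 ⟨x, (mem_inter.1 hx).1⟩)
  refine ⟨?_, ?_, ?_, ?_, ?_, ?_, fun p hp => hookPlusTableau_eq_zero rfl hCcard.symm hp⟩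
  · have hrow : (hookPlusTableau n m C ∘ fun j => (0, j)) = Nat.nth (· ∈ R) := by
      funext; simp [R]
    have hleg : (hookPlusTableau n m C ∘ fun i => (i + 1, 0)) = Nat.nth (· ∈ C) := by
      funext; simp
    have himage : (hookPlusCells #R (#C - 1)).image (hookPlusTableau n m C) = Icc 1 n := by
      rw [hookPlusCells_eq, image_union, image_insert, hCcard, firstRowCells, legCells,
        image_image, image_image, hrow, hleg, image_nth_range_card, image_nth_range_card,
        hookPlusTableau_one_one]
      exact sdiff_union_of_subset (insert_subset_Icc_one hm hC)
    exact bijOn_of_image_eq_of_card_eq (by rw [himage]; congr 1; omega)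
      (by simp [card_hookPlusCells])
  · simpa using nth_strictMonoOn R
  · simpa [hCcard] using nth_strictMonoOn C
  · simpa using (nth_lt_of_lt_card_filter_lt R hRpos).trans_le
      (hCge (nth_mem_of_lt_card C (by omega)))
  · simpa using nth_lt_of_lt_card_filter_lt C hCpos
  · simpa using nth_lt_of_lt_card_filter_lt R hRlt

end hookPlusTableau

lemma injOn_hookPlusTableau (n : ℕ) :
    Set.InjOn (fun x : Σ _ : ℕ, Finset ℕ => hookPlusTableau n x.1 x.2) (hookPlusData n) := by
  rintro ⟨m, C⟩ hx ⟨m', C'⟩ hx' h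
  have h0 {m D} (hD : D ∈ hookPlusLegs n m) : 0 ∉ D := fun h => by
    simpa using (mem_hookPlusLegs.1 hD).1 h
  simp only [hookPlusData, coe_sigma, Set.mem_sigma_iff, mem_coe] at hx hx' h
  obtain rfl : m = m' := congrFun h (1, 1)
  obtain rfl : C = C' := by
    ext x
    rw [mem_iff_exists_hookPlusTableau_eq (h0 hx.2), mem_iff_exists_hookPlusTableau_eq (h0 hx'.2),
      h]
  rfl

namespace IsSYTOn

variable {a b : ℕ} {T : ℕ × ℕ → ℕ}

lemma image_firstRowCells (hT : IsSYTOn (hookPlusCells a b) T) :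
    (firstRowCells a).image T =
      firstRowEntries (a + b + 2) (T (1, 1)) ((legCells (b + 1)).image T) := by
  have himage : (hookPlusCells a b).image T = Icc 1 (a + b + 2) := by
    rw [← card_hookPlusCells a b, ← coe_inj, coe_image, hT.1.image_eq]
  have hsub : insert (1, 1) (legCells (b + 1)) ⊆ hookPlusCells a b := by
    rw [hookPlusCells_eq]; exact subset_union_right
  rw [firstRowEntries, ← himage, ← image_insert,
    ← image_sdiff_of_injOn hT.1.injOn hsub, hookPlusCells_eq,
    union_sdiff_cancel_right (disjoint_firstRowCells_insert_legCells a (b + 1))]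

lemma card_image_legCells (hT : IsSYTOn (hookPlusCells a b) T) :
    #((legCells (b + 1)).image T) = b + 1 := by
  rw [card_image_of_injOn (hT.1.injOn.mono ?_), card_legCells]
  rw [hookPlusCells_eq]
  exact coe_subset.2 (subset_union_right.trans' (subset_insert _ _))

lemma eq_hookPlusTableau (ha : 2 ≤ a) (hT : IsSYTOn (hookPlusCells a b) T) :
    T = hookPlusTableau (a + b + 2) (T (1, 1)) ((legCells (b + 1)).image T) := by
  obtain ⟨-, hrow, hleg, -, -, -, hzero⟩ := (isSYTOn_hookPlusCells_iff ha).1 hT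
  have hR : (range a).image (fun j => T (0, j)) =
      firstRowEntries (a + b + 2) (T (1, 1)) ((legCells (b + 1)).image T) := by
    rw [← hT.image_firstRowCells, firstRowCells, image_image]; rfl
  have hC : (range (b + 1)).image (fun i => T (i + 1, 0)) = (legCells (b + 1)).image T := by
    rw [legCells, image_image]; rfl
  funext p
  by_cases hp : p ∈ hookPlusCells a b
  · rcases mem_hookPlusCells.1 hp with ⟨j, hj, rfl⟩ | rfl | ⟨i, hi, rfl⟩
    · exact eqOn_nth_of_strictMonoOn _ hrow hR hj
    · rfl
    · rw [hookPlusTableau_succ_zero]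
      exact eqOn_nth_of_strictMonoOn _ hleg hC hi
  · have hRcard := hR ▸ card_image_of_injOn (by simpa using hrow.injOn)
    rw [hzero p hp,
      hookPlusTableau_eq_zero (hRcard.trans (card_range a)) hT.card_image_legCells hp]

lemma mem_hookPlusData (ha : 2 ≤ a) (hT : IsSYTOn (hookPlusCells a b) T) :
    ⟨T (1, 1), (legCells (b + 1)).image T⟩ ∈ hookPlusData (a + b + 2) := by
  obtain ⟨hbij, hrow, hleg, h00, h10, h01, -⟩ := (isSYTOn_hookPlusCells_iff ha).1 hT
  have leg {i} (hi : i < b + 1) : (i + 1, 0) ∈ hookPlusCells a b :=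
    mem_hookPlusCells.2 (.inr (.inr ⟨i, hi, rfl⟩))
  have box : (1, 1) ∈ hookPlusCells a b := mem_hookPlusCells.2 (.inr (.inl rfl))
  have hval {p} (hp : p ∈ hookPlusCells a b) : T p ∈ Icc 1 (a + b + 2) := hbij.mapsTo hp
  have h00val := mem_Icc.1 (hval (mem_hookPlusCells.2 (.inl ⟨0, by omega, rfl⟩)))
  have hm := mem_Icc.1 (hval box)
  have h01R : T (0, 1) ∈ firstRowEntries (a + b + 2) (T (1, 1)) ((legCells (b + 1)).image T) :=
    hT.image_firstRowCells ▸ mem_image_of_mem T (mem_image_of_mem _ (mem_range.2 (by omega)))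
  have h001 : T (0, 0) < T (0, 1) :=
    hrow (Set.mem_Iio.2 (by omega)) (Set.mem_Iio.2 (by omega)) zero_lt_one
  simp only [hookPlusData, mem_sigma, mem_hookPlusLegs]
  refine ⟨mem_Icc.2 ⟨by omega, hm.2⟩, ?_, ⟨T (1, 0), ?_⟩, fun h => ?_⟩
  · intro x hx
    obtain ⟨p, hp, rfl⟩ := mem_image.1 hx
    obtain ⟨i, hi, rfl⟩ := mem_image.1 hp
    have hvalLeg := mem_Icc.1 (hval (leg (mem_range.1 hi)))
    have hle : T (1, 0) ≤ T (i + 1, 0) :=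
      hleg.monotoneOn (by simp) (by simpa using hi) (Nat.zero_le i)
    have hne : T (i + 1, 0) ≠ T (1, 1) := fun h => by
      simpa using hbij.injOn (leg (mem_range.1 hi)) box h
    simp only [mem_erase, mem_Icc]
    omega
  · exact mem_inter.2 ⟨mem_image_of_mem T (by simp [legCells]), mem_Ico.2 ⟨by omega, h10⟩⟩
  · have : T (0, 1) ∈ Ico 2 (T (1, 1)) := mem_Ico.2 ⟨by omega, h01⟩
    rw [← h] at this
    exact (mem_firstRowEntries.1 h01R).2.2 (mem_inter.1 this).1

end IsSYTOn

theorem hookPlus_count (n : ℕ) (hn : 4 ≤ n) :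
    Nat.card {T : ℕ × ℕ → ℕ // ∃ a b : ℕ, 2 ≤ a ∧ a + 2 + b = n ∧
        IsSYTOn (hookPlusCells a b) T} =
      (n - 4) * 2 ^ (n - 2) + 2 := by
  have hS : {T | ∃ a b : ℕ, 2 ≤ a ∧ a + 2 + b = n ∧ IsSYTOn (hookPlusCells a b) T} =
      (fun x : Σ _ : ℕ, Finset ℕ => hookPlusTableau n x.1 x.2) '' hookPlusData n := by
    ext T
    constructor
    · rintro ⟨a, b, ha, rfl, hT⟩
      rw [add_right_comm]
      exact ⟨_, hT.mem_hookPlusData ha, (hT.eq_hookPlusTableau ha).symm⟩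
    · rintro ⟨⟨m, C⟩, hx, rfl⟩
      obtain ⟨hm, hC⟩ := mem_sigma.1 hx
      exact ⟨_, _, two_le_card_firstRowEntries hm hC, card_firstRowEntries_add hm hC,
        isSYTOn_hookPlusTableau hm hC⟩
  rw [← Set.coe_ofPred, Nat.card_coe_set_eq, hS, (injOn_hookPlusTableau n).ncard_image,
    Set.ncard_coe_finset, card_hookPlusData hn]
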